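/- arXiv:math/0604284 — 2 statements merged into one kernel-verified Lean document; each statement's English description precedes it below -/
import Mathlib

section
/- Let H be an infinite-dimensional separable real Hilbert space which is an orthogonal SO(2)-representation, let Φ ∈ C²(H×ℝ,ℝ) satisfy condition (c2), and let λ₋ < λ₀ < λ₊ be such that Id - K_∞(λ) is an isomorphism of H for every λ ∈ [λ₋,λ₊] \ {λ₀}. Then every unbounded closed connected subset C of {(u,λ) ∈ H × [λ₋,λ₊] : ∇ᵤΦ(u,λ) = 0} meets (∞,λ₀), i.e., for all γ, δ > 0 there is (u,λ) ∈ C with ‖u‖ > γ and |λ - λ₀| ≤ δ. -/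
/-!
Suppose solutions `(uₙ, λₙ) ∈ C` with `‖uₙ‖ → ∞` stayed away from `λ₀`; pass to a subsequence with
`λₙ → λ* ≠ λ₀`. Since `∇ᵤη` is sublinear, `vₙ = uₙ / ‖uₙ‖` satisfies `vₙ = K(λₙ) vₙ + o(1)`, so
compactness of `(u, λ) ↦ K(λ) u` gives a further subsequence with `vₙ → q`, `‖q‖ = 1`. Compactness
also bounds `‖K(λ)‖` on `[λ₋, λ₊]`, and `λ ↦ K(λ) x` is continuous because `∇ᵤΦ` is; hence
`K(λ*) q = q`, contradicting the invertibility of `Id - K(λ*)`.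
-/

open Real

noncomputable section

/-- A map between (subsets of) normed spaces is compact if it maps bounded sets into
relatively compact sets. -/
def IsCompactMap {X Y : Type*} [NormedAddCommGroup X] [NormedAddCommGroup Y]
    (f : X → Y) : Prop :=
  ∀ s : Set X, Bornology.IsBounded s → IsCompact (closure (f '' s))

open Filter Topology Bornology Set InnerProductSpace

theorem exists_seq_mem_tendsto_cobounded {E : Type*} [SeminormedAddCommGroup E] {s : Set E}
    (hs : ¬IsBounded s) : ∃ x : ℕ → E, (∀ n, x n ∈ s) ∧ Tendsto x atTop (cobounded E) := by
  simp only [isBounded_iff_forall_norm_le, not_exists, not_forall, not_le] at hs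
  choose x hxs hx using fun n : ℕ => hs n
  exact ⟨x, hxs, tendsto_norm_atTop_iff_cobounded.1 <|
    tendsto_atTop_mono (fun n => (hx n).le) tendsto_natCast_atTop_atTop⟩

theorem ContinuousLinearMap.tendsto_apply_of_norm_le {𝕜 E F ι : Type*}
    [NontriviallyNormedField 𝕜] [SeminormedAddCommGroup E] [NormedSpace 𝕜 E]
    [SeminormedAddCommGroup F] [NormedSpace 𝕜 F] {L : Filter ι} {T : ι → E →L[𝕜] F}
    {x : ι → E} {x₀ : E} {y : F} {M : ℝ} (hT : ∀ i, ‖T i‖ ≤ M) (hx : Tendsto x L (𝓝 x₀))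
    (hy : Tendsto (fun i => T i x₀) L (𝓝 y)) : Tendsto (fun i => T i (x i)) L (𝓝 y) := by
  have hsmall : Tendsto (fun i => T i (x i - x₀)) L (𝓝 0) := by
    refine squeeze_zero_norm (fun i => ((T i).le_opNorm _).trans
      (mul_le_mul_of_nonneg_right (hT i) (norm_nonneg _))) ?_
    simpa using (tendsto_iff_norm_sub_tendsto_zero.1 hx).const_mul M
  simpa using hy.add hsmall

theorem IsCompactMap.exists_opNorm_le {E F P : Type*} [NormedAddCommGroup E] [NormedSpace ℝ E]
    [NormedAddCommGroup F] [NormedSpace ℝ F] [NormedAddCommGroup P] {K : P → E →L[ℝ] F}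
    (hK : IsCompactMap fun p : E × P => K p.2 p.1) {s : Set P} (hs : IsBounded s) :
    ∃ M, ∀ l ∈ s, ‖K l‖ ≤ M := by
  obtain ⟨M, hM⟩ := isBounded_iff_forall_norm_le.1
    (hK _ ((Metric.isBounded_closedBall (x := (0 : E)) (r := 1)).prod hs)).isBounded
  refine ⟨max M 0, fun l hl => ContinuousLinearMap.opNorm_le_of_unit_norm (le_max_right _ _)
    fun x hx => (hM _ (subset_closure ⟨(x, l), ⟨?_, hl⟩, rfl⟩)).trans (le_max_left _ _)⟩
  simp [hx]

section Gradient

variable {H : Type*} [NormedAddCommGroup H] [InnerProductSpace ℝ H] [CompleteSpace H]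

theorem hasGradientAt_half_inner_self_sub_half_inner_apply {A : H →L[ℝ] H}
    (hA : (A : H →ₗ[ℝ] H).IsSymmetric) (u : H) :
    HasGradientAt (fun w => (1/2 : ℝ) * (inner ℝ w w : ℝ) - (1/2 : ℝ) * (inner ℝ (A w) w : ℝ))
      (u - A u) u := by
  rw [hasGradientAt_iff_hasFDerivAt]
  refine ((((hasFDerivAt_id u).inner ℝ (hasFDerivAt_id u)).const_mul (1/2 : ℝ)).sub
    ((A.hasFDerivAt.inner ℝ (hasFDerivAt_id u)).const_mul (1/2 : ℝ))).congr_fderiv ?_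
  have hsym : ∀ v, (inner ℝ (A v) u : ℝ) = inner ℝ (A u) v := fun v =>
    (hA v u).trans (real_inner_comm _ _)
  ext v
  simp only [sub_apply, smul_apply,
    ContinuousLinearMap.comp_apply, ContinuousLinearMap.prod_apply, fderivInnerCLM_apply,
    ContinuousLinearMap.coe_id', id_eq, smul_eq_mul, toDual_apply_apply, inner_sub_left]
  rw [hsym, real_inner_comm u v]
  ring

theorem gradient_add_gradient_eq_sub_apply {A : H →L[ℝ] H} (hA : (A : H →ₗ[ℝ] H).IsSymmetric)
    {f g : H → ℝ}
    (hfg : ∀ w, f w = (1/2 : ℝ) * (inner ℝ w w : ℝ) - (1/2 : ℝ) * (inner ℝ (A w) w : ℝ) - g w)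
    {u : H} (hf : DifferentiableAt ℝ f u) :
    gradient f u + gradient g u = u - A u := by
  have hg : g = fun w => ((1/2 : ℝ) * (inner ℝ w w : ℝ) - (1/2 : ℝ) * (inner ℝ (A w) w : ℝ))
      - f w := by
    funext w
    linarith [hfg w]
  have hg' : HasGradientAt g (u - A u - gradient f u) u := by
    rw [hg, hasGradientAt_iff_hasFDerivAt, map_sub]
    exact (hasGradientAt_half_inner_self_sub_half_inner_apply hA u).hasFDerivAt.sub
      hf.hasGradientAt.hasFDerivAt
  rw [hg'.gradient]
  abel

theorem ContDiff.continuous_partialGradient {P : Type*} [NormedAddCommGroup P]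
    [NormedSpace ℝ P] {Φ : H × P → ℝ} (hΦ : ContDiff ℝ 1 Φ) (x : H) :
    Continuous fun l => gradient (fun w => Φ (w, l)) x := by
  have hgrad : ∀ l, gradient (fun w => Φ (w, l)) x
      = (toDual ℝ H).symm ((fderiv ℝ Φ (x, l)).comp (ContinuousLinearMap.inl ℝ H P)) := fun l =>
    (((hΦ.differentiable one_ne_zero (x, l)).hasFDerivAt.comp x
      (hasFDerivAt_prodMk_left x l)).hasGradientAt).gradient
  simp only [hgrad]
  exact (toDual ℝ H).symm.continuous.comp <|
    ((hΦ.continuous_fderiv one_ne_zero).comp (continuous_const.prodMk continuous_id)).clm_comp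
      continuous_const

end Gradient

section Sublinear

variable {E F P : Type*} [NormedAddCommGroup E] [NormedAddCommGroup F]

def SublinearUniformlyOn (g : E → P → F) (s : Set P) : Prop :=
  ∀ ε > 0, ∀ᶠ u in cobounded E, ∀ l ∈ s, ‖g u l‖ ≤ ε * ‖u‖

theorem SublinearUniformlyOn.tendsto_inv_norm_smul [NormedSpace ℝ F] {ι : Type*} {g : E → P → F} {s : Set P}
    (hg : SublinearUniformlyOn g s) {L : Filter ι} {u : ι → E} {l : ι → P}
    (hu : Tendsto u L (cobounded E)) (hl : ∀ i, l i ∈ s) :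
    Tendsto (fun i => ‖u i‖⁻¹ • g (u i) (l i)) L (𝓝 0) := by
  refine Metric.tendsto_nhds.2 fun ε hε => ?_
  filter_upwards [hu.eventually (hg (ε / 2) (half_pos hε))] with i hi
  rw [dist_zero_right, norm_smul, norm_inv, norm_norm]
  calc ‖u i‖⁻¹ * ‖g (u i) (l i)‖ ≤ ‖u i‖⁻¹ * (ε / 2 * ‖u i‖) := by gcongr; exact hi _ (hl i)
    _ = ε / 2 * (‖u i‖⁻¹ * ‖u i‖) := by ring
    _ ≤ ε / 2 := mul_le_of_le_one_right (half_pos hε).le inv_mul_le_one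
    _ < ε := half_lt_self hε

/-- The identity `K l x = x - t⁻¹ • G (t • x) l - t⁻¹ • R (t • x) l` exhibits `l ↦ K l x` as the
uniform limit on `s`, as `t → ∞`, of the continuous maps `l ↦ x - t⁻¹ • G (t • x) l`. -/
theorem continuousOn_apply_of_sublinearUniformlyOn [NormedSpace ℝ E] [TopologicalSpace P]
    {K : P → E →L[ℝ] E} {G R : E → P → E} (hKGR : ∀ u l, G u l + R u l = u - K l u)
    (hG : ∀ u, Continuous (G u)) {s : Set P} (hR : SublinearUniformlyOn R s) (x : E) :
    ContinuousOn (fun l => K l x) s := by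
  rcases eq_or_ne x 0 with rfl | hx
  · simpa using continuousOn_const
  have hcob : Tendsto (fun t : ℝ => t • x) atTop (cobounded E) := by
    refine tendsto_norm_atTop_iff_cobounded.1 ?_
    simp only [norm_smul]
    exact tendsto_norm_atTop_atTop.atTop_mul_const (norm_pos_iff.2 hx)
  have hx' : 0 < ‖x‖ := norm_pos_iff.2 hx
  have hunif : TendstoUniformlyOn (fun (t : ℝ) l => x - t⁻¹ • G (t • x) l) (fun l => K l x)
      atTop s := by
    refine Metric.tendstoUniformlyOn_iff.2 fun ε hε => ?_
    filter_upwards [hcob.eventually (hR (ε / (2 * ‖x‖)) (by positivity)), eventually_gt_atTop 0]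
      with t ht ht0 l hl
    have hrem : K l x - (x - t⁻¹ • G (t • x) l) = -(t⁻¹ • R (t • x) l) := by
      have := congrArg (t⁻¹ • ·) (hKGR (t • x) l)
      simp only [smul_add, smul_sub, map_smul, smul_smul, inv_mul_cancel₀ ht0.ne', one_smul] at this
      linear_combination (norm := module) this
    rw [dist_eq_norm, hrem, norm_neg, norm_smul, norm_inv, norm_of_nonneg ht0.le]
    calc t⁻¹ * ‖R (t • x) l‖ ≤ t⁻¹ * (ε / (2 * ‖x‖) * (t * ‖x‖)) := by
          gcongr
          simpa [norm_smul, abs_of_pos ht0] using ht l hl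
      _ = ε / 2 := by field_simp
      _ < ε := half_lt_self hε
  exact hunif.continuousOn (Frequently.of_forall fun t =>
    Continuous.continuousOn (by have := hG (t • x); fun_prop))

theorem exists_ne_zero_apply_eq_self_of_tendsto_cobounded [NormedSpace ℝ E] [NormedAddCommGroup P]
    {K : P → E →L[ℝ] E} {G R : E → P → E} (hKGR : ∀ u l, G u l + R u l = u - K l u)
    (hG : ∀ u, Continuous (G u)) (hK : IsCompactMap fun p : E × P => K p.2 p.1) {s : Set P}
    (hs : IsBounded s) (hR : SublinearUniformlyOn R s) {u : ℕ → E} {l : ℕ → P} {l₀ : P}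
    (hsol : ∀ n, G (u n) (l n) = 0) (hu : Tendsto u atTop (cobounded E)) (hl : ∀ n, l n ∈ s)
    (hl₀ : l₀ ∈ s) (hlim : Tendsto l atTop (𝓝 l₀)) : ∃ q ≠ 0, K l₀ q = q := by
  set v : ℕ → E := fun n => ‖u n‖⁻¹ • u n
  have hv : ∀ n, v n = K (l n) (v n) + ‖u n‖⁻¹ • R (u n) (l n) := by
    intro n
    have hKR := hKGR (u n) (l n)
    rw [hsol n, zero_add] at hKR
    simp only [v, map_smul, hKR, smul_sub]
    abel
  have hv_le : ∀ n, ‖v n‖ ≤ 1 := fun n => by simpa [v, norm_smul] using inv_mul_le_one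
  have hv_one : ∀ᶠ n in atTop, ‖v n‖ = 1 :=
    hu.eventually_ne_cobounded 0 |>.mono fun n hn => by simp [v, norm_smul, hn]
  obtain ⟨q, -, ψ, hψ, hKv⟩ :=
    (hK _ ((Metric.isBounded_closedBall (x := (0 : E)) (r := 1)).prod hs)).tendsto_subseq
      (x := fun n => K (l n) (v n)) fun n =>
        subset_closure ⟨(v n, l n), ⟨mem_closedBall_zero_iff.2 (hv_le n), hl n⟩, rfl⟩
  have hvq : Tendsto (v ∘ ψ) atTop (𝓝 q) := by
    simpa [Function.comp_def, ← hv] using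
      hKv.add ((hR.tendsto_inv_norm_smul hu hl).comp hψ.tendsto_atTop)
  have hq : ‖q‖ = 1 := tendsto_nhds_unique hvq.norm <| tendsto_const_nhds.congr' <|
    (hψ.tendsto_atTop.eventually hv_one).mono fun n hn => hn.symm
  obtain ⟨M, hM⟩ := hK.exists_opNorm_le hs
  have hKq : Tendsto (fun n => K (l (ψ n)) q) atTop (𝓝 (K l₀ q)) :=
    (continuousOn_apply_of_sublinearUniformlyOn hKGR hG hR q l₀ hl₀).tendsto.comp <|
      tendsto_nhdsWithin_iff.2 ⟨hlim.comp hψ.tendsto_atTop, .of_forall fun n => hl _⟩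
  refine ⟨q, ?_, tendsto_nhds_unique
    (ContinuousLinearMap.tendsto_apply_of_norm_le (fun n => hM _ (hl (ψ n))) hvq hKq) hKv⟩
  rintro rfl
  simp at hq

end Sublinear

theorem stmt_7_general
    -- H : infinite-dimensional separable real Hilbert space
    (H : Type) [NormedAddCommGroup H] [InnerProductSpace ℝ H] [CompleteSpace H]
    -- Φ ∈ C²(H×ℝ,ℝ), SO(2)-invariant in the first variable
    (Φ : H × ℝ → ℝ) (hΦ : ContDiff ℝ 2 Φ)
    -- condition (c2)
    (K : ℝ → H →L[ℝ] H) (η : H × ℝ → ℝ)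
    (hc2 : ∀ (u : H) (l : ℝ),
      Φ (u, l) = (1/2 : ℝ) * (inner ℝ u u : ℝ) - (1/2 : ℝ) * (inner ℝ (K l u) u : ℝ) - η (u, l))
    (hKsa : ∀ (l : ℝ) (u v : H), (inner ℝ (K l u) v : ℝ) = (inner ℝ u (K l v) : ℝ))
    (hKcomp : IsCompactMap fun p : H × ℝ => K p.2 p.1)
    (hηsmall : ∀ ε > (0:ℝ), ∀ a b : ℝ, ∃ R : ℝ, ∀ (u : H) (l : ℝ),
      l ∈ Set.Icc a b → R ≤ ‖u‖ → ‖gradient (fun w => η (w, l)) u‖ ≤ ε * ‖u‖)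
    -- λ₋ < λ₀ < λ₊ with Id - K_∞(λ) an isomorphism for λ ∈ [λ₋,λ₊] \ {λ₀}
    (lm l0 lp : ℝ)
    (hiso : ∀ l ∈ Set.Icc lm lp, l ≠ l0 →
      ∃ T : H ≃L[ℝ] H, ∀ u : H, T u = u - K l u)
    -- C : unbounded closed connected subset of the solution set
    (C : Set (H × ℝ))
    (hCsub : C ⊆ {p : H × ℝ | p.2 ∈ Set.Icc lm lp ∧ gradient (fun w => Φ (w, p.2)) p.1 = 0})
    (hCunb : ¬ Bornology.IsBounded C) :
    ∀ γ > (0:ℝ), ∀ δ > (0:ℝ), ∃ p ∈ C, γ < ‖p.1‖ ∧ |p.2 - l0| ≤ δ := by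
  intro γ _ δ hδ
  by_contra! hfar
  have hgrad : ∀ u l, gradient (fun w => Φ (w, l)) u + gradient (fun w => η (w, l)) u
      = u - K l u := fun u l =>
    gradient_add_gradient_eq_sub_apply (hKsa l) (fun w => hc2 w l)
      ((hΦ.differentiable two_ne_zero (u, l)).comp u (hasFDerivAt_prodMk_left u l).differentiableAt)
  have hη : SublinearUniformlyOn (fun u l => gradient (fun w => η (w, l)) u) (Icc lm lp) :=
    fun ε hε => (hηsmall ε hε lm lp).elim fun R hR =>
      (eventually_cobounded_le_norm R).mono fun u hu l hl => hR u l hl hu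
  have hfst : ¬IsBounded (Prod.fst '' C) := fun hb =>
    hCunb <| (hb.prod (Metric.isBounded_Icc lm lp)).subset fun p hp =>
      ⟨mem_image_of_mem _ hp, (hCsub hp).1⟩
  obtain ⟨x, hxC, hx⟩ := exists_seq_mem_tendsto_cobounded hfst
  choose p hpC hpx using hxC
  obtain ⟨ls, hls, φ, hφ, hlim⟩ := isCompact_Icc.tendsto_subseq fun n => (hCsub (hpC n)).1
  have hu : Tendsto (fun n => (p (φ n)).1) atTop (cobounded H) :=
    (hx.comp hφ.tendsto_atTop).congr fun n => (hpx _).symm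
  have hne : ls ≠ l0 := by
    have hfar_ls : δ ≤ |ls - l0| := ge_of_tendsto (hlim.sub_const l0).abs <|
      (hu.eventually (tendsto_norm_cobounded_atTop.eventually_gt_atTop γ)).mono fun n hn =>
        (hfar _ (hpC _) hn).le
    rintro rfl
    simp only [sub_self, abs_zero] at hfar_ls
    linarith
  obtain ⟨q, hq, hKq⟩ := exists_ne_zero_apply_eq_self_of_tendsto_cobounded hgrad
    (hΦ.of_le one_le_two).continuous_partialGradient hKcomp (Metric.isBounded_Icc lm lp) hη
    (fun n => (hCsub (hpC (φ n))).2) hu (fun n => (hCsub (hpC (φ n))).1) hls hlim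
  obtain ⟨T, hT⟩ := hiso ls hls hne
  exact hq (T.injective (by rw [hT, hKq, sub_self, map_zero]))

theorem stmt_7
    -- H : infinite-dimensional separable real Hilbert space
    (H : Type) [NormedAddCommGroup H] [InnerProductSpace ℝ H] [CompleteSpace H]
    [TopologicalSpace.SeparableSpace H] (hdim : ¬ FiniteDimensional ℝ H)
    -- orthogonal SO(2)-representation with continuous action
    (ρ : Circle →* (H ≃ₗᵢ[ℝ] H))
    (hcont : Continuous fun p : Circle × H => ρ p.1 p.2)
    -- Φ ∈ C²(H×ℝ,ℝ), SO(2)-invariant in the first variable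
    (Φ : H × ℝ → ℝ) (hΦ : ContDiff ℝ 2 Φ)
    (hinv : ∀ (g : Circle) (u : H) (l : ℝ), Φ (ρ g u, l) = Φ (u, l))
    -- condition (c2)
    (K : ℝ → H →L[ℝ] H) (η : H × ℝ → ℝ)
    (hc2 : ∀ (u : H) (l : ℝ),
      Φ (u, l) = (1/2 : ℝ) * (inner ℝ u u : ℝ) - (1/2 : ℝ) * (inner ℝ (K l u) u : ℝ) - η (u, l))
    (hKsa : ∀ (l : ℝ) (u v : H), (inner ℝ (K l u) v : ℝ) = (inner ℝ u (K l v) : ℝ))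
    (hKeq : ∀ (l : ℝ) (g : Circle) (u : H), K l (ρ g u) = ρ g (K l u))
    (hKcomp : IsCompactMap fun p : H × ℝ => K p.2 p.1)
    (hηeq : ∀ (g : Circle) (u : H) (l : ℝ),
      gradient (fun w => η (w, l)) (ρ g u) = ρ g (gradient (fun w => η (w, l)) u))
    (hηcomp : IsCompactMap fun p : H × ℝ => gradient (fun w => η (w, p.2)) p.1)
    (hηsmall : ∀ ε > (0:ℝ), ∀ a b : ℝ, ∃ R : ℝ, ∀ (u : H) (l : ℝ),
      l ∈ Set.Icc a b → R ≤ ‖u‖ → ‖gradient (fun w => η (w, l)) u‖ ≤ ε * ‖u‖)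
    -- λ₋ < λ₀ < λ₊ with Id - K_∞(λ) an isomorphism for λ ∈ [λ₋,λ₊] \ {λ₀}
    (lm l0 lp : ℝ) (hlm : lm < l0) (hlp : l0 < lp)
    (hiso : ∀ l ∈ Set.Icc lm lp, l ≠ l0 →
      ∃ T : H ≃L[ℝ] H, ∀ u : H, T u = u - K l u)
    -- C : unbounded closed connected subset of the solution set
    (C : Set (H × ℝ))
    (hCsub : C ⊆ {p : H × ℝ | p.2 ∈ Set.Icc lm lp ∧ gradient (fun w => Φ (w, p.2)) p.1 = 0})
    (hCclosed : IsClosed C) (hCconn : IsConnected C)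
    (hCunb : ¬ Bornology.IsBounded C) :
    ∀ γ > (0:ℝ), ∀ δ > (0:ℝ), ∃ p ∈ C, γ < ‖p.1‖ ∧ |p.2 - l0| ≤ δ :=
  stmt_7_general H Φ hΦ K η hc2 hKsa hKcomp hηsmall lm l0 lp hiso C hCsub hCunb
end
end

section
/- Let K be a compact Hausdorff topological space and let A and B be disjoint closed subsets of K. If there is no closed connected subset of K that intersects both A and B, then there exist disjoint closed subsets K_A and K_B of K such that A ⊆ K_A, B ⊆ K_B, and K = K_A ∪ K_B. -/
open Set

lemma exists_clopen_sep
    {K : Type} [TopologicalSpace K] [CompactSpace K] [T2Space K]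
    {B : Set K} (hB : IsClosed B) {a : K}
    (hdisj : connectedComponent a ∩ B = ∅) :
    ∃ U : Set K, IsClopen U ∧ a ∈ U ∧ U ∩ B = ∅ := by
  have key := hB.isCompact.elim_finite_subfamily_closed
      (fun s : { s : Set K // IsClopen s ∧ a ∈ s } => (s : Set K))
      (fun s => s.2.1.1) ?_
  · obtain ⟨t, ht⟩ := key
    refine ⟨⋂ i ∈ t, (i : Set K), isClopen_biInter_finset fun i _ => i.2.1, ?_, ?_⟩
    · exact mem_iInter₂.2 fun i _ => i.2.2
    · rw [inter_comm]; exact ht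
  · rw [← connectedComponent_eq_iInter_isClopen a, inter_comm]; exact hdisj

theorem stmt_12
    (K : Type) [TopologicalSpace K] [CompactSpace K] [T2Space K]
    (A B : Set K) (hA : IsClosed A) (hB : IsClosed B) (hAB : Disjoint A B)
    -- no closed connected subset of K intersects both A and B
    (h : ¬ ∃ C : Set K, IsClosed C ∧ IsConnected C ∧ (C ∩ A).Nonempty ∧ (C ∩ B).Nonempty) :
    ∃ KA KB : Set K, IsClosed KA ∧ IsClosed KB ∧ Disjoint KA KB ∧
      A ⊆ KA ∧ B ⊆ KB ∧ KA ∪ KB = Set.univ := by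
  push_neg at h
  have key : ∀ a : A, ∃ U : Set K, IsClopen U ∧ (a : K) ∈ U ∧ U ∩ B = ∅ := by
    rintro ⟨a, ha⟩
    exact exists_clopen_sep hB (h _ isClosed_connectedComponent
        ⟨⟨a, mem_connectedComponent⟩, isPreconnected_connectedComponent⟩
        ⟨a, mem_connectedComponent, ha⟩)
  choose U hUclopen hUmem hUB using key
  have hcover : A ⊆ ⋃ a : A, U a := fun x hx =>
    mem_iUnion.2 ⟨⟨x, hx⟩, hUmem ⟨x, hx⟩⟩
  obtain ⟨t, ht⟩ := hA.isCompact.elim_finite_subcover U (fun a => (hUclopen a).2) hcover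
  set KA : Set K := ⋃ a ∈ t, U a with hKA
  have hKAclopen : IsClopen KA := isClopen_biUnion_finset fun a _ => hUclopen a
  refine ⟨KA, KAᶜ, hKAclopen.1, hKAclopen.2.isClosed_compl, disjoint_compl_right, ht, ?_, union_compl_self _⟩
  intro b hb hbKA
  obtain ⟨a, -, hba⟩ := mem_iUnion₂.1 hbKA
  exact eq_empty_iff_forall_notMem.1 (hUB a) b ⟨hba, hb⟩
end
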